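/- arXiv:1906.00164 — 3 statements merged into one kernel-verified Lean document; each statement's English description precedes it below -/
import Mathlib

section
/- Let A ∈ M(3, F_q) and define F_A(x,y,z) = (x,y,z) A (y^q z − y z^q, z^q x − z x^q, x^q y − x y^q)^t ∈ F_q[x,y,z]. Then F_A is the zero polynomial if and only if A = μE for some μ ∈ F_q, where E is the identity matrix. -/
open MvPolynomial

private lemma factor_aux (F : Type*) [Field F] {q : ℕ} (hq : 2 ≤ q) {a b : F}
    (h : (Polynomial.C a * Polynomial.X + Polynomial.C b) * (Polynomial.X ^ q - Polynomial.X) = 0) :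
    a = 0 ∧ b = 0 := by
  have hne : (Polynomial.X ^ q - Polynomial.X : Polynomial F) ≠ 0 := by
    intro h0
    have := congrArg (fun p => Polynomial.coeff p q) h0
    simp [Polynomial.coeff_X, if_neg (show ¬(1=q) by omega)] at this
  rcases mul_eq_zero.mp h with h1 | h1
  · constructor
    · have := congrArg (fun p => Polynomial.coeff p 1) h1
      simpa using this
    · have := congrArg (fun p => Polynomial.coeff p 0) h1
      simpa using this
  · exact absurd h1 hne

theorem stmt1 (F : Type*) [Field F] [Fintype F] (q : ℕ) (hq : q = Fintype.card F)
    (A : Matrix (Fin 3) (Fin 3) F) :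
    (∑ i : Fin 3, ∑ j : Fin 3, X i * C (A i j) *
        (![(X 1) ^ q * X 2 - X 1 * (X 2) ^ q,
           (X 2) ^ q * X 0 - X 2 * (X 0) ^ q,
           (X 0) ^ q * X 1 - X 0 * (X 1) ^ q] j) : MvPolynomial (Fin 3) F) = 0
      ↔ ∃ μ : F, A = μ • (1 : Matrix (Fin 3) (Fin 3) F) := by
  have hq2 : 2 ≤ q := by rw [hq]; exact Fintype.one_lt_card
  have hq0 : q ≠ 0 := by omega
  constructor
  · intro h
    have h1 := congrArg (aeval (![Polynomial.X, 1, 0] : Fin 3 → Polynomial F)) h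
    simp [Fin.sum_univ_three, Polynomial.algebraMap_eq, zero_pow hq0] at h1
    obtain ⟨e02, e12⟩ := factor_aux F hq2 (a := A 0 2) (b := A 1 2) (by linear_combination h1)
    have h2 := congrArg (aeval (![0, Polynomial.X, 1] : Fin 3 → Polynomial F)) h
    simp [Fin.sum_univ_three, Polynomial.algebraMap_eq, zero_pow hq0] at h2
    obtain ⟨e10, e20⟩ := factor_aux F hq2 (a := A 1 0) (b := A 2 0) (by linear_combination h2)
    have h3 := congrArg (aeval (![1, 0, Polynomial.X] : Fin 3 → Polynomial F)) h
    simp [Fin.sum_univ_three, Polynomial.algebraMap_eq, zero_pow hq0] at h3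
    obtain ⟨e21, e01⟩ := factor_aux F hq2 (a := A 2 1) (b := A 0 1) (by linear_combination h3)
    have h4 := congrArg (aeval (![Polynomial.X, Polynomial.X, 1] : Fin 3 → Polynomial F)) h
    simp [Fin.sum_univ_three, Polynomial.algebraMap_eq, zero_pow hq0] at h4
    obtain ⟨e4, -⟩ := factor_aux F hq2 (a := A 0 0 - A 0 1 + A 1 0 - A 1 1)
      (b := A 2 0 - A 2 1) (by simp only [map_sub, map_add]; linear_combination h4)
    have h5 := congrArg (aeval (![1, Polynomial.X, Polynomial.X] : Fin 3 → Polynomial F)) h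
    simp [Fin.sum_univ_three, Polynomial.algebraMap_eq, zero_pow hq0] at h5
    obtain ⟨e5, -⟩ := factor_aux F hq2 (a := A 1 1 - A 1 2 + A 2 1 - A 2 2)
      (b := A 0 1 - A 0 2) (by simp only [map_sub, map_add]; linear_combination h5)
    have e6 : A 1 1 = A 0 0 := by linear_combination e10 - e01 - e4
    have e7 : A 2 2 = A 0 0 := by linear_combination e21 - e12 - e5 + e6
    refine ⟨A 0 0, ?_⟩
    ext i j
    fin_cases i <;> fin_cases j <;>
      simp [Matrix.one_apply, e02, e12, e10, e20, e21, e01, e6, e7]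
  · rintro ⟨μ, rfl⟩
    simp [Fin.sum_univ_three, Matrix.smul_apply, Matrix.one_apply]
    ring
end

section
/- Let α ∈ F_q, a, b ∈ F_q with g(t) = t^2 − bt − a irreducible over F_q, and let A be the block matrix with blocks [[0,a],[1,b]] and [α] (so f_A(t) = (t−α)g(t)). Then F_A(x,y,z) = y(y^q z − y z^q) + (ax+by)(z^q x − z x^q) + αz(x^q y − x y^q) factors as z · G(x,y,z), where G(x,y,z) = (x^q − x z^{q−1}, y^q − y z^{q−1}) · M · (x,y,z)^t with M the 2×3 matrix [[−a, α−b, 0],[−α, 1, 0]]. -/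
open MvPolynomial

theorem stmt6 (F : Type*) [Field F] [Fintype F] (q : ℕ) (hq : q = Fintype.card F)
    (α a b : F)
    (hg : Irreducible (Polynomial.X ^ 2 - Polynomial.C b * Polynomial.X - Polynomial.C a :
      Polynomial F)) :
    (X 1 * ((X 1) ^ q * X 2 - X 1 * (X 2) ^ q)
      + (C a * X 0 + C b * X 1) * ((X 2) ^ q * X 0 - X 2 * (X 0) ^ q)
      + C α * X 2 * ((X 0) ^ q * X 1 - X 0 * (X 1) ^ q) : MvPolynomial (Fin 3) F)
    = X 2 * (((X 0) ^ q - X 0 * (X 2) ^ (q - 1)) * (C (-a) * X 0 + C (α - b) * X 1)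
        + ((X 1) ^ q - X 1 * (X 2) ^ (q - 1)) * (C (-α) * X 0 + X 1)) := by
  obtain ⟨n, rfl⟩ : ∃ n, q = n + 1 :=
    ⟨Fintype.card F - 1, by have := Fintype.card_pos (α := F); omega⟩
  simp only [Nat.add_sub_cancel, map_neg, map_sub]
  ring
end

section
/- In F_q[x,y,z], the identity x(z^q x − z x^q) + y(x^q y − x y^q) = x(z^q x − z x^q + x^{q−1}y^2 − y^{q+1}) holds, so the plane filling curve associated to the nilpotent Jordan block of size 3 splits into an F_q-line and a curve of degree q+1. -/
open MvPolynomial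

theorem stmt9 (F : Type*) [Field F] [Fintype F] (q : ℕ) (hq : q = Fintype.card F) :
    (X 0 * ((X 2) ^ q * X 0 - X 2 * (X 0) ^ q)
      + X 1 * ((X 0) ^ q * X 1 - X 0 * (X 1) ^ q) : MvPolynomial (Fin 3) F)
    = X 0 * ((X 2) ^ q * X 0 - X 2 * (X 0) ^ q
        + (X 0) ^ (q - 1) * (X 1) ^ 2 - (X 1) ^ (q + 1)) := by
  obtain ⟨k, rfl⟩ : ∃ k, q = k + 1 :=
    ⟨q - 1, (Nat.succ_pred_eq_of_pos (hq ▸ Fintype.card_pos)).symm⟩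
  simp only [Nat.add_sub_cancel]
  ring
end
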